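/- Suppose β is an ℋ-measurable real random variable satisfying the conditional log relative risk model on the available subpopulation: I·( e^{−β}·E[YA | ℋ]·(1 − p) − E[Y(1 − A) | ℋ]·p ) = 0 almost surely. Let c and F be any ℋ-measurable real random variables and define the weight K̃ := e^{β} / ( e^{β}·(1 − e^{c})·p + (1 − e^{c + β})·(1 − p) ), assumed almost surely well defined (nonvanishing denominator), and assume the integrand below is integrable. Then E[ I · e^{−Aβ} · (Y − e^{c + Aβ}) · K̃ · (A − p) · F ] = 0; i.e., each summand of the conditional-effect estimating function m_C has mean zero regardless of whether the working model c for log E[Y | ℋ, A = 0, I = 1] is correctly specified. -/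

import Mathlib

open MeasureTheory Real Filter

lemma integral_bddMul_condexp
    {Ω : Type*} {m0 : MeasurableSpace Ω} {μ : Measure Ω} [IsProbabilityMeasure μ]
    {m : MeasurableSpace Ω} (hm : m ≤ m0)
    {g X : Ω → ℝ} (hg : StronglyMeasurable[m] g) {C : ℝ} (hgC : ∀ ω, ‖g ω‖ ≤ C)
    (hX : Integrable X μ) :
    Integrable (fun ω => g ω * X ω) μ ∧
      ∫ ω, g ω * X ω ∂μ = ∫ ω, g ω * (μ[X|m]) ω ∂μ := by
  have hgX : Integrable (fun ω => g ω * X ω) μ :=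
    hX.bdd_mul ((hg.mono hm).aestronglyMeasurable) (Eventually.of_forall hgC)
  refine ⟨hgX, ?_⟩
  have h1 : ∫ ω, g ω * X ω ∂μ = ∫ ω, (μ[(fun ω => g ω * X ω)|m]) ω ∂μ :=
    (integral_condExp hm).symm
  have h2 : μ[(fun ω => g ω * X ω)|m] =ᵐ[μ] fun ω => g ω * (μ[X|m]) ω :=
    condExp_mul_of_stronglyMeasurable_left hg hgX hX
  rw [h1, integral_congr_ae h2]

set_option maxHeartbeats 1000000 in
theorem conditional_estimating_function_mean_zero
    {Ω : Type*} (m : MeasurableSpace Ω) {m0 : MeasurableSpace Ω} (μ : Measure Ω) [IsProbabilityMeasure μ]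
    (hm : m ≤ m0)
    (A : Ω → ℝ) (hA : Measurable A) (hA01 : ∀ ω, A ω = 0 ∨ A ω = 1)
    (hp : ∀ᵐ ω ∂μ, 0 < (μ[A|m]) ω ∧ (μ[A|m]) ω < 1)
    (Y : Ω → ℝ) (hY01 : ∀ ω, 0 ≤ Y ω ∧ Y ω ≤ 1) (hYint : Integrable Y μ)
    (I : Ω → ℝ) (hI : StronglyMeasurable[m] I) (hI01 : ∀ ω, I ω = 0 ∨ I ω = 1)
    (β : Ω → ℝ) (hβ : StronglyMeasurable[m] β)
    (hmodel : (fun ω => I ω * (exp (-(β ω)) * (μ[(fun ω' => Y ω' * A ω')|m]) ω *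
        (1 - (μ[A|m]) ω) - (μ[(fun ω' => Y ω' * (1 - A ω'))|m]) ω * (μ[A|m]) ω))
      =ᵐ[μ] 0)
    (c F : Ω → ℝ) (hc : StronglyMeasurable[m] c) (hF : StronglyMeasurable[m] F)
    (hdenom : ∀ᵐ ω ∂μ, exp (β ω) * (1 - exp (c ω)) * (μ[A|m]) ω +
      (1 - exp (c ω + β ω)) * (1 - (μ[A|m]) ω) ≠ 0)
    (hint : Integrable (fun ω => I ω * exp (-(A ω * β ω)) *
      (Y ω - exp (c ω + A ω * β ω)) *
      (exp (β ω) / (exp (β ω) * (1 - exp (c ω)) * (μ[A|m]) ω +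
        (1 - exp (c ω + β ω)) * (1 - (μ[A|m]) ω))) *
      (A ω - (μ[A|m]) ω) * F ω) μ) :
    ∫ ω, I ω * exp (-(A ω * β ω)) * (Y ω - exp (c ω + A ω * β ω)) *
      (exp (β ω) / (exp (β ω) * (1 - exp (c ω)) * (μ[A|m]) ω +
        (1 - exp (c ω + β ω)) * (1 - (μ[A|m]) ω))) *
      (A ω - (μ[A|m]) ω) * F ω ∂μ = 0 := by
  classical
  set p : Ω → ℝ := μ[A|m] with hp'
  set EYA : Ω → ℝ := μ[(fun ω' => Y ω' * A ω')|m] with hEYA'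
  set EY1A : Ω → ℝ := μ[(fun ω' => Y ω' * (1 - A ω'))|m] with hEY1A'
  have hA' : Measurable[m0] A := hA
  have hAae : AEStronglyMeasurable[m0] A μ := hA'.aestronglyMeasurable
  have hβm : Measurable[m] β := hβ.measurable
  have hcm : Measurable[m] c := hc.measurable
  have hFm : Measurable[m] F := hF.measurable
  have hIm : Measurable[m] I := hI.measurable
  have hpm : Measurable[m] p := stronglyMeasurable_condExp.measurable
  -- abbreviations
  set D : Ω → ℝ := fun ω => exp (β ω) * (1 - exp (c ω)) * p ω +
      (1 - exp (c ω + β ω)) * (1 - p ω) with hD'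
  set K : Ω → ℝ := fun ω => exp (β ω) / D ω with hK'
  set f : Ω → ℝ := fun ω => I ω * exp (-(A ω * β ω)) * (Y ω - exp (c ω + A ω * β ω)) *
      K ω * (A ω - p ω) * F ω with hf'
  have hfint : Integrable f μ := hint
  show ∫ ω, f ω ∂μ = 0
  have hDm : Measurable[m] D := by
    exact (((measurable_exp.comp hβm).mul (measurable_const.sub
      (measurable_exp.comp hcm))).mul hpm).add
      ((measurable_const.sub (measurable_exp.comp (hcm.add hβm))).mul
        (measurable_const.sub hpm))
  have hKm : Measurable[m] K := (measurable_exp.comp hβm).div hDm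
  -- basic bounds
  have hA1 : ∀ ω, |A ω| ≤ 1 := fun ω => by rcases hA01 ω with h | h <;> simp [h]
  have hI1 : ∀ ω, |I ω| ≤ 1 := fun ω => by rcases hI01 ω with h | h <;> simp [h]
  -- basic integrability
  have hAint : Integrable A μ := by
    refine (integrable_const (1 : ℝ)).mono' hAae ?_
    exact Eventually.of_forall fun ω => by simpa using hA1 ω
  have hYAint : Integrable (fun ω => Y ω * A ω) μ := by
    refine hYint.norm.mono' (hYint.1.mul hAae) ?_
    refine Eventually.of_forall fun ω => ?_
    calc ‖Y ω * A ω‖ = ‖Y ω‖ * |A ω| := by rw [norm_mul]; rfl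
      _ ≤ ‖Y ω‖ * 1 := by gcongr; exact hA1 ω
      _ = ‖Y ω‖ := mul_one _
  have hY1Aint : Integrable (fun ω => Y ω * (1 - A ω)) μ := by
    refine hYint.norm.mono' (hYint.1.mul (aestronglyMeasurable_const.sub hAae)) ?_
    refine Eventually.of_forall fun ω => ?_
    have h1A : |1 - A ω| ≤ 1 := by
      rcases hA01 ω with h | h <;> simp [h]
    calc ‖Y ω * (1 - A ω)‖ = ‖Y ω‖ * |1 - A ω| := by rw [norm_mul]; rfl
      _ ≤ ‖Y ω‖ * 1 := by gcongr
      _ = ‖Y ω‖ := mul_one _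
  have hpint : Integrable p μ := integrable_condExp
  have hApint : Integrable (fun ω => A ω - p ω) μ := hAint.sub hpint
  -- the good sets
  set S : ℕ → Set Ω := fun n => {ω | |β ω| ≤ n ∧ |c ω| ≤ n ∧ |F ω| ≤ n ∧ |p ω| ≤ n ∧
      1 / ((n : ℝ) + 1) ≤ |D ω|} with hS'
  have hSmeas : ∀ n, MeasurableSet[m] (S n) := by
    intro n
    letI := m
    exact (measurableSet_le hβm.abs measurable_const).inter
      ((measurableSet_le hcm.abs measurable_const).inter
        ((measurableSet_le hFm.abs measurable_const).inter
          ((measurableSet_le hpm.abs measurable_const).inter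
            (measurableSet_le measurable_const hDm.abs))))
  -- the three m-measurable multipliers
  set g1 : Ω → ℝ := fun ω => I ω * K ω * F ω * (exp (-(β ω)) * (1 - p ω)) with hg1'
  set g2 : Ω → ℝ := fun ω => -(I ω * K ω * F ω * p ω) with hg2'
  set g3 : Ω → ℝ := fun ω => -(I ω * K ω * F ω * exp (c ω)) with hg3'
  have hg1m : Measurable[m] g1 :=
    ((hIm.mul hKm).mul hFm).mul ((measurable_exp.comp hβm.neg).mul
      (measurable_const.sub hpm))
  have hg2m : Measurable[m] g2 := (((hIm.mul hKm).mul hFm).mul hpm).neg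
  have hg3m : Measurable[m] g3 :=
    (((hIm.mul hKm).mul hFm).mul (measurable_exp.comp hcm)).neg
  -- the pointwise decomposition
  have hsplit : ∀ ω, f ω = g1 ω * (Y ω * A ω) + g2 ω * (Y ω * (1 - A ω)) +
      g3 ω * (A ω - p ω) := by
    intro ω
    rcases hA01 ω with h | h <;>
      · simp only [hf', hg1', hg2', hg3', h, zero_mul, one_mul, mul_zero, mul_one,
          exp_zero, add_zero, neg_zero, exp_add, exp_neg]
        field_simp
        ring
  -- bound on K on S n
  have hKbd : ∀ (n : ℕ) (ω : Ω), ω ∈ S n → |K ω| ≤ exp n * ((n : ℝ) + 1) := by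
    intro n ω hω
    obtain ⟨hb, hc2, hF2, hp2, hD2⟩ := hω
    have hKabs : |K ω| = exp (β ω) / |D ω| := by
      rw [hK', abs_div, abs_of_pos (exp_pos _)]
    rw [hKabs]
    calc exp (β ω) / |D ω| ≤ exp n / (1 / ((n : ℝ) + 1)) := by
          apply div_le_div₀ (exp_pos _).le (exp_le_exp.2 (le_of_abs_le hb))
            (by positivity) hD2
      _ = exp n * ((n : ℝ) + 1) := by rw [one_div, div_eq_mul_inv, inv_inv]
  -- bounds on indicator multipliers
  have hg1bd : ∀ (n : ℕ) (ω : Ω),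
      ‖(S n).indicator g1 ω‖ ≤ 1 * (exp n * ((n : ℝ) + 1)) * n * (exp n * ((n : ℝ) + 1)) := by
    intro n ω
    by_cases hω : ω ∈ S n
    · rw [Set.indicator_of_mem hω]
      obtain ⟨hb, hc2, hF2, hp2, hD2⟩ := hω
      have : ‖g1 ω‖ = |I ω| * |K ω| * |F ω| * (|exp (-(β ω))| * |1 - p ω|) := by
        simp only [hg1', Real.norm_eq_abs, abs_mul, abs_neg]
      rw [this]
      have h4 : |exp (-(β ω))| ≤ exp n := by
        rw [abs_of_pos (exp_pos _)]
        exact exp_le_exp.2 (by linarith [(abs_le.mp hb).1])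
      have h5 : |1 - p ω| ≤ (n : ℝ) + 1 := by
        obtain ⟨hl, hr⟩ := abs_le.mp hp2
        rw [abs_le]; constructor <;> linarith
      gcongr
      · exact hI1 ω
      · exact hKbd n ω ⟨hb, hc2, hF2, hp2, hD2⟩
    · rw [Set.indicator_of_notMem hω]
      have hb0 : (0 : ℝ) ≤ 1 * (exp n * ((n : ℝ) + 1)) * n * (exp n * ((n : ℝ) + 1)) := by
        positivity
      simpa using hb0
  have hg2bd : ∀ (n : ℕ) (ω : Ω),
      ‖(S n).indicator g2 ω‖ ≤ 1 * (exp n * ((n : ℝ) + 1)) * n * (exp n * ((n : ℝ) + 1)) := by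
    intro n ω
    by_cases hω : ω ∈ S n
    · rw [Set.indicator_of_mem hω]
      obtain ⟨hb, hc2, hF2, hp2, hD2⟩ := hω
      have : ‖g2 ω‖ = |I ω| * |K ω| * |F ω| * |p ω| := by
        simp only [hg2', Real.norm_eq_abs, abs_mul, abs_neg]
      rw [this]
      have h4 : |p ω| ≤ exp n * ((n : ℝ) + 1) := by
        have h1e : (1 : ℝ) ≤ exp n := one_le_exp (by positivity)
        nlinarith [abs_nonneg (p ω)]
      gcongr
      · exact hI1 ω
      · exact hKbd n ω ⟨hb, hc2, hF2, hp2, hD2⟩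
    · rw [Set.indicator_of_notMem hω]
      have hb0 : (0 : ℝ) ≤ 1 * (exp n * ((n : ℝ) + 1)) * n * (exp n * ((n : ℝ) + 1)) := by
        positivity
      simpa using hb0
  have hg3bd : ∀ (n : ℕ) (ω : Ω),
      ‖(S n).indicator g3 ω‖ ≤ 1 * (exp n * ((n : ℝ) + 1)) * n * (exp n * ((n : ℝ) + 1)) := by
    intro n ω
    by_cases hω : ω ∈ S n
    · rw [Set.indicator_of_mem hω]
      obtain ⟨hb, hc2, hF2, hp2, hD2⟩ := hω
      have : ‖g3 ω‖ = |I ω| * |K ω| * |F ω| * |exp (c ω)| := by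
        simp only [hg3', Real.norm_eq_abs, abs_mul, abs_neg]
      rw [this]
      have h4 : |exp (c ω)| ≤ exp n * ((n : ℝ) + 1) := by
        rw [abs_of_pos (exp_pos _)]
        have : exp (c ω) ≤ exp n := exp_le_exp.2 (le_of_abs_le hc2)
        nlinarith [exp_pos (n : ℝ)]
      gcongr
      · exact hI1 ω
      · exact hKbd n ω ⟨hb, hc2, hF2, hp2, hD2⟩
    · rw [Set.indicator_of_notMem hω]
      have hb0 : (0 : ℝ) ≤ 1 * (exp n * ((n : ℝ) + 1)) * n * (exp n * ((n : ℝ) + 1)) := by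
        positivity
      simpa using hb0
  -- the key vanishing for each n
  have key : ∀ n : ℕ, ∫ ω, (S n).indicator f ω ∂μ = 0 := by
    intro n
    have hm1 : StronglyMeasurable[m] ((S n).indicator g1) :=
      (hg1m.indicator (hSmeas n)).stronglyMeasurable
    have hm2 : StronglyMeasurable[m] ((S n).indicator g2) :=
      (hg2m.indicator (hSmeas n)).stronglyMeasurable
    have hm3 : StronglyMeasurable[m] ((S n).indicator g3) :=
      (hg3m.indicator (hSmeas n)).stronglyMeasurable
    obtain ⟨hint1, heq1⟩ := integral_bddMul_condexp hm hm1 (hg1bd n) hYAint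
    obtain ⟨hint2, heq2⟩ := integral_bddMul_condexp hm hm2 (hg2bd n) hY1Aint
    obtain ⟨hint3, heq3⟩ := integral_bddMul_condexp hm hm3 (hg3bd n) hApint
    have hdecomp : ∀ ω, (S n).indicator f ω =
        (S n).indicator g1 ω * (Y ω * A ω) + (S n).indicator g2 ω * (Y ω * (1 - A ω)) +
          (S n).indicator g3 ω * (A ω - p ω) := by
      intro ω
      by_cases hω : ω ∈ S n
      · rw [Set.indicator_of_mem hω, Set.indicator_of_mem hω, Set.indicator_of_mem hω,
          Set.indicator_of_mem hω]
        exact hsplit ω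
      · rw [Set.indicator_of_notMem hω, Set.indicator_of_notMem hω,
          Set.indicator_of_notMem hω, Set.indicator_of_notMem hω]
        ring
    -- condexp of A - p is 0
    have hcondAp : μ[(fun ω => A ω - p ω)|m] =ᵐ[μ] 0 := by
      have h1 : μ[(fun ω => A ω - p ω)|m] =ᵐ[μ] μ[A|m] - μ[p|m] := condExp_sub hAint hpint m
      have h2 : μ[p|m] = p :=
        condExp_of_stronglyMeasurable hm stronglyMeasurable_condExp hpint
      refine h1.trans ?_
      rw [h2]
      refine Eventually.of_forall fun ω => ?_
      simp [hp']
    -- third integral vanishes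
    have h3zero : ∫ ω, (S n).indicator g3 ω * (μ[(fun ω => A ω - p ω)|m]) ω ∂μ = 0 := by
      rw [integral_congr_ae (g := fun _ => (0 : ℝ))]
      · exact integral_zero _ _
      · filter_upwards [hcondAp] with ω hω
        simp [hω]
    -- first two integrals combine to 0 using the model
    have h12zero : ∫ ω, (S n).indicator g1 ω * EYA ω ∂μ +
        ∫ ω, (S n).indicator g2 ω * EY1A ω ∂μ = 0 := by
      have hi1 : Integrable (fun ω => (S n).indicator g1 ω * EYA ω) μ :=
        integrable_condExp.bdd_mul ((hm1.mono hm).aestronglyMeasurable)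
          (Eventually.of_forall (hg1bd n))
      have hi2 : Integrable (fun ω => (S n).indicator g2 ω * EY1A ω) μ :=
        integrable_condExp.bdd_mul ((hm2.mono hm).aestronglyMeasurable)
          (Eventually.of_forall (hg2bd n))
      rw [← integral_add hi1 hi2]
      rw [integral_congr_ae (g := fun _ => (0 : ℝ))]
      · exact integral_zero _ _
      · filter_upwards [hmodel] with ω hω
        have hω' : I ω * (exp (-(β ω)) * EYA ω * (1 - p ω) - EY1A ω * p ω) = 0 := hω
        by_cases hmem : ω ∈ S n
        · rw [Set.indicator_of_mem hmem, Set.indicator_of_mem hmem]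
          have : g1 ω * EYA ω + g2 ω * EY1A ω =
              K ω * F ω * (I ω * (exp (-(β ω)) * EYA ω * (1 - p ω) - EY1A ω * p ω)) := by
            simp only [hg1', hg2']; ring
          rw [this, hω', mul_zero]
        · rw [Set.indicator_of_notMem hmem, Set.indicator_of_notMem hmem]
          ring
    calc ∫ ω, (S n).indicator f ω ∂μ
        = ∫ ω, ((S n).indicator g1 ω * (Y ω * A ω) +
            (S n).indicator g2 ω * (Y ω * (1 - A ω)) +
            (S n).indicator g3 ω * (A ω - p ω)) ∂μ :=
          integral_congr_ae (Eventually.of_forall hdecomp)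
      _ = (∫ ω, ((S n).indicator g1 ω * (Y ω * A ω) +
            (S n).indicator g2 ω * (Y ω * (1 - A ω))) ∂μ) +
            ∫ ω, (S n).indicator g3 ω * (A ω - p ω) ∂μ :=
          integral_add (hint1.add hint2) hint3
      _ = (∫ ω, (S n).indicator g1 ω * (Y ω * A ω) ∂μ +
            ∫ ω, (S n).indicator g2 ω * (Y ω * (1 - A ω)) ∂μ) +
            ∫ ω, (S n).indicator g3 ω * (A ω - p ω) ∂μ := by
          rw [integral_add hint1 hint2]
      _ = (∫ ω, (S n).indicator g1 ω * EYA ω ∂μ +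
            ∫ ω, (S n).indicator g2 ω * EY1A ω ∂μ) +
            ∫ ω, (S n).indicator g3 ω * (μ[(fun ω => A ω - p ω)|m]) ω ∂μ := by
          rw [heq1, heq2, heq3]
      _ = 0 := by rw [h12zero, h3zero, add_zero]
  -- pass to the limit
  have hDne : ∀ᵐ ω ∂μ, D ω ≠ 0 := hdenom
  have hae : ∀ᵐ ω ∂μ, Filter.Tendsto (fun n : ℕ => (S n).indicator f ω) atTop (nhds (f ω)) := by
    filter_upwards [hDne] with ω hω
    have h0 : 0 < |D ω| := abs_pos.mpr hω
    obtain ⟨N, hN⟩ := exists_nat_ge (max (max (|β ω|) (|c ω|)) (max (|F ω|) (|p ω|)))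
    obtain ⟨M, hM⟩ := exists_nat_one_div_lt h0
    refine tendsto_const_nhds.congr' ?_
    filter_upwards [Filter.eventually_ge_atTop (max N M)] with n hn
    have hNn : (N : ℝ) ≤ n := Nat.cast_le.2 (le_trans (le_max_left _ _) hn)
    have hMn : 1 / ((n : ℝ) + 1) ≤ 1 / ((M : ℝ) + 1) := by
      apply one_div_le_one_div_of_le (by positivity)
      have : (M : ℝ) ≤ n := Nat.cast_le.2 (le_trans (le_max_right _ _) hn)
      linarith
    have hωS : ω ∈ S n := by
      refine ⟨?_, ?_, ?_, ?_, le_trans hMn hM.le⟩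
      · exact le_trans (le_trans (le_max_left _ _) (le_max_left _ _)) (le_trans hN hNn)
      · exact le_trans (le_trans (le_max_right _ _) (le_max_left _ _)) (le_trans hN hNn)
      · exact le_trans (le_trans (le_max_left _ _) (le_max_right _ _)) (le_trans hN hNn)
      · exact le_trans (le_trans (le_max_right _ _) (le_max_right _ _)) (le_trans hN hNn)
    exact (Set.indicator_of_mem hωS f).symm
  have hdct : Filter.Tendsto (fun n : ℕ => ∫ ω, (S n).indicator f ω ∂μ) atTop
      (nhds (∫ ω, f ω ∂μ)) := by
    refine tendsto_integral_of_dominated_convergence (fun ω => ‖f ω‖)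
      (fun n => hfint.1.indicator (hm _ (hSmeas n))) hfint.norm
      (fun n => Eventually.of_forall fun ω => norm_indicator_le_norm_self f ω) hae
  have h0' : Filter.Tendsto (fun n : ℕ => ∫ ω, (S n).indicator f ω ∂μ) atTop (nhds 0) := by
    simp only [key]
    exact tendsto_const_nhds
  exact tendsto_nhds_unique hdct h0'
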